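/- The operator D₋^{(L)} := X₋ + (i/2)·y²·𝔏^{-1}[∂_z̄] = −2iy(y∂_τ̄ + vᵀ∂_z̄ − (1/4)y·𝔏^{-1}[∂_z̄]) is covariant from the weight-k to the weight-(k−2) slash action: for every invertible complex symmetric N×N matrix L, every k ∈ ℤ, every g ∈ G̃^J_N, and every smooth function f on ℍ_{1,N}, D₋^{(L)}(f|_{k,L}[g]) = (D₋^{(L)}f)|_{k-2,L}[g]. -/

import Mathlib

/-!
The slash action is `f ↦ j · (f ∘ φ)`, where the automorphy factor `j = β^k α_L` and the map
`φ = g · _` are holomorphic. Hence the antiholomorphic Wirtinger derivative, which is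
conjugate-linear in the direction, only sees `f ∘ φ`:
`∂̄(f|g)(p) w = j(p) · ∂̄f(φ p)(φ'(p) w)`.
The differential `φ'(p)` multiplies the `zⱼ`-directions by `β`, and it sends the direction
`Im p = (y, v)` to `(β / β̄) · Im (φ p)`. Together with `Im (Mτ) = y |β|²` this makes both
`X₋ = −2iy · ∂̄(·)(Im p)` and `y² 𝔏⁻¹[∂_z̄]` pick up the factor `β⁻²`, which turns weight `k`
into weight `k − 2`.
-/

open Matrix Complex

noncomputable section

def J2 : Matrix (Fin 2) (Fin 2) ℝ := !![0, -1; 1, 0]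

/-- An element of the (centrally extended) Jacobi group data: a triple (M, X, κ). -/
structure JTriple (N : ℕ) where
  M : Matrix (Fin 2) (Fin 2) ℝ
  X : Matrix (Fin N) (Fin 2) ℝ
  κ : Matrix (Fin N) (Fin N) ℝ

/-- Membership in the centrally extended real Jacobi group `G̃^J_N`. -/
def JTriple.IsMem {N : ℕ} (g : JTriple N) : Prop :=
  g.M.det = 1 ∧ (g.κ + (2⁻¹ : ℝ) • (g.X * J2 * g.X.transpose)).IsSymm

/-- The group law of `G̃^J_N`. -/
def JTriple.mul {N : ℕ} (g g' : JTriple N) : JTriple N :=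
  ⟨g.M * g'.M, g.X * g'.M + g'.X, g.κ + g'.κ - g.X * g'.M * J2 * g'.X.transpose⟩

/-- The Möbius action `Mτ := (aτ+b)/(cτ+d)`. -/
def mAct (M : Matrix (Fin 2) (Fin 2) ℝ) (τ : ℂ) : ℂ :=
  ((M 0 0 : ℝ) * τ + (M 0 1 : ℝ)) / ((M 1 0 : ℝ) * τ + (M 1 1 : ℝ))

/-- The cocycle `β(M,τ) := (cτ+d)⁻¹`. -/
def betaC (M : Matrix (Fin 2) (Fin 2) ℝ) (τ : ℂ) : ℂ :=
  (((M 1 0 : ℝ) : ℂ) * τ + ((M 1 1 : ℝ) : ℂ))⁻¹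

/-- First column of `X`, as a complex vector. -/
def col1 {N : ℕ} (X : Matrix (Fin N) (Fin 2) ℝ) : Fin N → ℂ := fun i => (X i 0 : ℂ)

/-- Second column of `X`, as a complex vector. -/
def col2 {N : ℕ} (X : Matrix (Fin N) (Fin 2) ℝ) : Fin N → ℂ := fun i => (X i 1 : ℂ)

/-- The action of `G̃^J_N` on `ℍ_{1,N} ⊆ ℂ × ℂ^N`:
`(M,X,κ)·(τ,z) := (Mτ, β(M,τ)(z + X₁τ + X₂))`. -/
def jAct {N : ℕ} (g : JTriple N) (p : ℂ × (Fin N → ℂ)) : ℂ × (Fin N → ℂ) :=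
  (mAct g.M p.1, betaC g.M p.1 • (p.2 + p.1 • col1 g.X + col2 g.X))

/-- The matrix-valued function `a(g, (τ,z))`. -/
def aFun {N : ℕ} (g : JTriple N) (p : ℂ × (Fin N → ℂ)) : Matrix (Fin N) (Fin N) ℂ :=
  g.κ.map (fun t => (t : ℂ))
    + vecMulVec (col2 g.X) (col1 g.X) + vecMulVec (col1 g.X) p.2 + vecMulVec p.2 (col1 g.X)
    + p.1 • vecMulVec (col1 g.X) (col1 g.X)
    - (((g.M 1 0 : ℝ) : ℂ) * betaC g.M p.1) •
        vecMulVec (p.2 + p.1 • col1 g.X + col2 g.X) (p.2 + p.1 • col1 g.X + col2 g.X)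

/-- The scalar cocycle `α_L(g,(τ,z)) := e^{2πi·tr(L·a(g,(τ,z)))}`. -/
def alphaL {N : ℕ} (L : Matrix (Fin N) (Fin N) ℂ) (g : JTriple N)
    (p : ℂ × (Fin N → ℂ)) : ℂ :=
  Complex.exp (2 * Real.pi * Complex.I * (L * aFun g p).trace)

/-- The slash action `(f|_{k,L}[g])(τ,z) := β(M,τ)^k·α_L(g,(τ,z))·f(g·(τ,z))`. -/
def jSlash {N : ℕ} (k : ℤ) (L : Matrix (Fin N) (Fin N) ℂ)
    (f : ℂ × (Fin N → ℂ) → ℂ) (g : JTriple N) : ℂ × (Fin N → ℂ) → ℂ :=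
  fun p => betaC g.M p.1 ^ k * alphaL L g p * f (jAct g p)

/-- The Wirtinger derivative `∂_τ = ½(∂_x − i∂_y)` for functions on `ℂ × ℂ^N`. -/
def dTau {N : ℕ} (f : ℂ × (Fin N → ℂ) → ℂ) (p : ℂ × (Fin N → ℂ)) : ℂ :=
  (2⁻¹ : ℂ) * (fderiv ℝ f p (1, 0) - Complex.I * fderiv ℝ f p (Complex.I, 0))

/-- The Wirtinger derivative `∂_τ̄ = ½(∂_x + i∂_y)`. -/
def dTauBar {N : ℕ} (f : ℂ × (Fin N → ℂ) → ℂ) (p : ℂ × (Fin N → ℂ)) : ℂ :=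
  (2⁻¹ : ℂ) * (fderiv ℝ f p (1, 0) + Complex.I * fderiv ℝ f p (Complex.I, 0))

/-- The Wirtinger derivative `∂_{z_j} = ½(∂_{u_j} − i∂_{v_j})`. -/
def dZ {N : ℕ} (j : Fin N) (f : ℂ × (Fin N → ℂ) → ℂ) (p : ℂ × (Fin N → ℂ)) : ℂ :=
  (2⁻¹ : ℂ) * (fderiv ℝ f p (0, Pi.single j 1) -
    Complex.I * fderiv ℝ f p (0, Pi.single j Complex.I))

/-- The Wirtinger derivative `∂_{z̄_j} = ½(∂_{u_j} + i∂_{v_j})`. -/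
def dZBar {N : ℕ} (j : Fin N) (f : ℂ × (Fin N → ℂ) → ℂ) (p : ℂ × (Fin N → ℂ)) : ℂ :=
  (2⁻¹ : ℂ) * (fderiv ℝ f p (0, Pi.single j 1) +
    Complex.I * fderiv ℝ f p (0, Pi.single j Complex.I))

/-- `y = Im τ` as a complex number. -/
def yC {N : ℕ} (p : ℂ × (Fin N → ℂ)) : ℂ := (p.1.im : ℝ)

/-- `v_j = Im z_j` as a complex number. -/
def vC {N : ℕ} (p : ℂ × (Fin N → ℂ)) (j : Fin N) : ℂ := ((p.2 j).im : ℝ)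

/-- `𝔏 := 2πi·L`. -/
def Lfrak {N : ℕ} (L : Matrix (Fin N) (Fin N) ℂ) : Matrix (Fin N) (Fin N) ℂ :=
  (2 * (Real.pi : ℂ) * Complex.I) • L

/-- The lowering operator `X₋ := −2iy(y∂_τ̄ + vᵀ∂_z̄)`. -/
def opXm {N : ℕ} (f : ℂ × (Fin N → ℂ) → ℂ) (p : ℂ × (Fin N → ℂ)) : ℂ :=
  -2 * Complex.I * yC p * (yC p * dTauBar f p + ∑ j, vC p j * dZBar j f p)

/-- The raising operator `X₊^{k} := 2i(∂_τ + y⁻¹vᵀ∂_z + y⁻²𝔏[v]) + k·y⁻¹`. -/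
def opXp {N : ℕ} (L : Matrix (Fin N) (Fin N) ℂ) (k : ℤ)
    (f : ℂ × (Fin N → ℂ) → ℂ) (p : ℂ × (Fin N → ℂ)) : ℂ :=
  2 * Complex.I * (dTau f p + (yC p)⁻¹ * ∑ j, vC p j * dZ j f p
      + ((yC p)⁻¹) ^ 2 * (∑ i, ∑ j, vC p i * Lfrak L i j * vC p j) * f p)
    + (k : ℂ) * (yC p)⁻¹ * f p

/-- The lowering operator `Y₋,ⱼ := −iy∂_{z̄ⱼ}`. -/
def opYm {N : ℕ} (j : Fin N) (f : ℂ × (Fin N → ℂ) → ℂ) (p : ℂ × (Fin N → ℂ)) : ℂ :=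
  -Complex.I * yC p * dZBar j f p

/-- The raising operator `Y₊,ⱼ := i∂_{zⱼ} + 2iy⁻¹(𝔏v)ⱼ`. -/
def opYp {N : ℕ} (L : Matrix (Fin N) (Fin N) ℂ) (j : Fin N)
    (f : ℂ × (Fin N → ℂ) → ℂ) (p : ℂ × (Fin N → ℂ)) : ℂ :=
  Complex.I * dZ j f p + 2 * Complex.I * (yC p)⁻¹ * (∑ l, Lfrak L j l * vC p l) * f p
/-- The lowering operator `D₋^{(L)} := X₋ + (i/2)·y²·𝔏^{-1}[∂_z̄]
= −2iy(y∂_τ̄ + vᵀ∂_z̄ − ¼y·𝔏^{-1}[∂_z̄])`. -/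
def opDm {N : ℕ} (L : Matrix (Fin N) (Fin N) ℂ) (f : ℂ × (Fin N → ℂ) → ℂ)
    (p : ℂ × (Fin N → ℂ)) : ℂ :=
  opXm f p + Complex.I / 2 * (yC p) ^ 2 *
    ∑ i, ∑ j, (Lfrak L)⁻¹ i j * dZBar i (fun q => dZBar j f q) p

open ComplexConjugate Topology

section Wirtinger

variable {E F : Type*} [NormedAddCommGroup E] [NormedSpace ℂ E] [NormedSpace ℝ E]
  [IsScalarTower ℝ ℂ E] [NormedAddCommGroup F] [NormedSpace ℂ F] [NormedSpace ℝ F]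
  [IsScalarTower ℝ ℂ F]

def wirtingerBar (f : E → ℂ) (p : E) : E →ₗ⋆[ℂ] ℂ where
  toFun w := 2⁻¹ * (fderiv ℝ f p w + I * fderiv ℝ f p (I • w))
  map_add' w w' := by simp only [smul_add, map_add]; ring
  map_smul' c w := by
    have hre : ∀ (r : ℝ) (u : E), (r : ℂ) • u = r • u := fun r u => algebraMap_smul ℂ r u
    have hc : ∀ u : E,
        fderiv ℝ f p (c • u) = c.re * fderiv ℝ f p u + c.im * fderiv ℝ f p (I • u) := by
      intro u
      conv_lhs =>
        rw [← Complex.re_add_im c, add_smul, mul_smul, hre, hre, map_add, map_smul, map_smul]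
      simp only [Complex.real_smul]
    have hII : fderiv ℝ f p (I • I • w) = - fderiv ℝ f p w := by
      rw [smul_smul, I_mul_I, neg_one_smul, map_neg]
    simp only [smul_comm I c w, hc, hII, smul_eq_mul]
    conv_rhs => rw [← Complex.re_add_im c]
    simp only [map_add, map_mul, Complex.conj_ofReal, Complex.conj_I]
    ring_nf
    rw [I_sq]; ring

theorem wirtingerBar_apply (f : E → ℂ) (p w : E) :
    wirtingerBar f p w = 2⁻¹ * (fderiv ℝ f p w + I * fderiv ℝ f p (I • w)) := rfl

theorem wirtingerBar_mul {f g : E → ℂ} {p : E} (hf : DifferentiableAt ℝ f p)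
    (hg : DifferentiableAt ℝ g p) (w : E) :
    wirtingerBar (fun q => f q * g q) p w
      = wirtingerBar f p w * g p + f p * wirtingerBar g p w := by
  simp only [wirtingerBar_apply, fderiv_fun_mul hf hg, _root_.add_apply, _root_.smul_apply,
    smul_eq_mul]
  ring

theorem wirtingerBar_eq_zero {f : E → ℂ} {p : E} (hf : DifferentiableAt ℂ f p) :
    wirtingerBar f p = 0 := by
  ext w
  simp only [wirtingerBar_apply, hf.fderiv_restrictScalars ℝ,
    ContinuousLinearMap.coe_restrictScalars', map_smul, smul_eq_mul, LinearMap.zero_apply]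
  ring_nf
  rw [I_sq]; ring

theorem wirtingerBar_comp {f : F → ℂ} {φ : E → F} {p : E} (hf : DifferentiableAt ℝ f (φ p))
    (hφ : DifferentiableAt ℂ φ p) (w : E) :
    wirtingerBar (fun q => f (φ q)) p w = wirtingerBar f (φ p) (fderiv ℂ φ p w) := by
  have hcomp := fderiv_comp p hf (hφ.restrictScalars ℝ)
  simp only [wirtingerBar_apply, Function.comp_def] at hcomp ⊢
  simp only [hcomp, ContinuousLinearMap.comp_apply, hφ.fderiv_restrictScalars ℝ,
    ContinuousLinearMap.coe_restrictScalars', map_smul]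

theorem Filter.EventuallyEq.wirtingerBar_eq {f g : E → ℂ} {p : E} (h : f =ᶠ[𝓝 p] g) :
    wirtingerBar f p = wirtingerBar g p := by
  ext w
  simp only [wirtingerBar_apply, h.fderiv_eq]

theorem wirtingerBar_comp_fst_apply_zero_prodMk {f : E → ℂ} {p : E × F}
    (hf : DifferentiableAt ℝ f p.1) (w : F) :
    wirtingerBar (fun q : E × F => f q.1) p (0, w) = 0 := by
  rw [wirtingerBar_comp hf differentiableAt_fst, fderiv_fst]
  simp

end Wirtinger

section Coordinates

variable {N : ℕ} {f : ℂ × (Fin N → ℂ) → ℂ} {p : ℂ × (Fin N → ℂ)}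

def imVec (p : ℂ × (Fin N → ℂ)) : ℂ × (Fin N → ℂ) := (yC p, vC p)

theorem dTauBar_eq_wirtingerBar : dTauBar f p = wirtingerBar f p (1, 0) := by
  simp [dTauBar, wirtingerBar_apply]

theorem dZBar_eq_wirtingerBar (j : Fin N) :
    dZBar j f p = wirtingerBar f p (0, Pi.single j 1) := by
  simp [dZBar, wirtingerBar_apply, ← Pi.single_smul]

theorem wirtingerBar_zero_single (j : Fin N) (c : ℂ) :
    wirtingerBar f p (0, Pi.single j c) = conj c * dZBar j f p := by
  have hc : ((0 : ℂ), (Pi.single j c : Fin N → ℂ)) = c • (0, Pi.single j 1) := by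
    simp [← Pi.single_smul]
  rw [hc, map_smulₛₗ, dZBar_eq_wirtingerBar, smul_eq_mul]

theorem wirtingerBar_prodMk (a : ℂ) (b : Fin N → ℂ) :
    wirtingerBar f p (a, b) = conj a * dTauBar f p + ∑ j, conj (b j) * dZBar j f p := by
  have hab : ((a, b) : ℂ × (Fin N → ℂ)) = a • (1, 0) + ∑ j, b j • (0, Pi.single j 1) := by
    ext j
    · simp [Prod.fst_sum]
    · simp [Prod.snd_sum, Pi.single_apply]
  rw [hab, map_add, map_smulₛₗ, map_sum, dTauBar_eq_wirtingerBar]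
  simp only [map_smulₛₗ, dZBar_eq_wirtingerBar, smul_eq_mul]

theorem opXm_eq_wirtingerBar : opXm f p = -2 * I * yC p * wirtingerBar f p (imVec p) := by
  rw [opXm, imVec, wirtingerBar_prodMk]
  simp only [yC, vC, Complex.conj_ofReal]

theorem differentiable_dZBar (hf : ContDiff ℝ 2 f) (j : Fin N) :
    Differentiable ℝ (dZBar j f) := by
  have hf' : ContDiff ℝ 1 (fderiv ℝ f) := hf.fderiv_right (by norm_num)
  have h : ∀ v, Differentiable ℝ fun x => fderiv ℝ f x v := fun v =>
    (hf'.clm_apply contDiff_const).differentiable one_ne_zero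
  have h1 := h (0, Pi.single j 1)
  have h2 := h (0, Pi.single j I)
  unfold dZBar
  fun_prop

end Coordinates

section Moebius

variable (M : Matrix (Fin 2) (Fin 2) ℝ) {τ : ℂ}

theorem denom_ne_zero_of_det_eq_one (hM : M.det = 1) (hτ : 0 < τ.im) :
    ((M 1 0 : ℝ) : ℂ) * τ + ((M 1 1 : ℝ) : ℂ) ≠ 0 := by
  intro h
  have hc : M 1 0 = 0 := by
    simpa [hτ.ne'] using congrArg Complex.im h
  have hd : M 1 1 = 0 := by
    simpa [hc] using congrArg Complex.re h
  simp [Matrix.det_fin_two, hc, hd] at hM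

theorem betaC_ne_zero (hM : M.det = 1) (hτ : 0 < τ.im) : betaC M τ ≠ 0 :=
  inv_ne_zero (denom_ne_zero_of_det_eq_one M hM hτ)

theorem hasDerivAt_denom (i : Fin 2) :
    HasDerivAt (fun τ : ℂ => ((M i 0 : ℝ) : ℂ) * τ + ((M i 1 : ℝ) : ℂ)) ((M i 0 : ℝ) : ℂ) τ := by
  simpa using ((hasDerivAt_id τ).const_mul ((M i 0 : ℝ) : ℂ)).add_const ((M i 1 : ℝ) : ℂ)

variable {M}

theorem hasDerivAt_betaC (h : ((M 1 0 : ℝ) : ℂ) * τ + ((M 1 1 : ℝ) : ℂ) ≠ 0) :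
    HasDerivAt (betaC M) (-((M 1 0 : ℝ) : ℂ) * betaC M τ ^ 2) τ :=
  ((hasDerivAt_denom M 1).inv h).congr_deriv (by simp only [betaC]; field_simp)

theorem hasDerivAt_mAct (hM : M.det = 1) (h : ((M 1 0 : ℝ) : ℂ) * τ + ((M 1 1 : ℝ) : ℂ) ≠ 0) :
    HasDerivAt (mAct M) (betaC M τ ^ 2) τ := by
  have hdet : ((M 0 0 : ℝ) : ℂ) * M 1 1 - M 0 1 * M 1 0 = 1 := by
    exact_mod_cast Matrix.det_fin_two M ▸ hM
  refine ((hasDerivAt_denom M 0).div (hasDerivAt_denom M 1) h).congr_deriv ?_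
  simp only [betaC]
  field_simp
  linear_combination hdet

theorem conj_denom_ne_zero (h : ((M 1 0 : ℝ) : ℂ) * τ + ((M 1 1 : ℝ) : ℂ) ≠ 0) :
    ((M 1 0 : ℝ) : ℂ) * conj τ + ((M 1 1 : ℝ) : ℂ) ≠ 0 := by
  simpa [Complex.conj_ofReal] using (map_ne_zero (starRingEnd ℂ)).mpr h

theorem im_betaC (h : ((M 1 0 : ℝ) : ℂ) * τ + ((M 1 1 : ℝ) : ℂ) ≠ 0) :
    ((betaC M τ).im : ℂ) = -((M 1 0 : ℝ) : ℂ) * τ.im * betaC M τ * conj (betaC M τ) := by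
  have h' := conj_denom_ne_zero h
  simp only [Complex.im_eq_sub_conj, betaC, map_inv₀, map_add, map_mul, Complex.conj_ofReal]
  field_simp
  ring

theorem im_mAct (hM : M.det = 1) (h : ((M 1 0 : ℝ) : ℂ) * τ + ((M 1 1 : ℝ) : ℂ) ≠ 0) :
    ((mAct M τ).im : ℂ) = τ.im * betaC M τ * conj (betaC M τ) := by
  have h' := conj_denom_ne_zero h
  have hdet : ((M 0 0 : ℝ) : ℂ) * M 1 1 - M 0 1 * M 1 0 = 1 := by
    exact_mod_cast Matrix.det_fin_two M ▸ hM
  simp only [Complex.im_eq_sub_conj, mAct, betaC, map_div₀, map_inv₀, map_add, map_mul,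
    Complex.conj_ofReal]
  have hnum : (((M 0 0 : ℝ) : ℂ) * τ + M 0 1) * (M 1 0 * conj τ + M 1 1)
      - (M 1 0 * τ + M 1 1) * (M 0 0 * conj τ + M 0 1) = τ - conj τ := by
    linear_combination (τ - conj τ) * hdet
  rw [div_sub_div _ _ h h', hnum]
  simp only [div_eq_mul_inv, mul_inv]
  ring

end Moebius

section JacobiAction

variable {N : ℕ} {g : JTriple N} {q : ℂ × (Fin N → ℂ)}

theorem hasFDerivAt_jAct (hM : g.M.det = 1) (hq : 0 < q.1.im) :
    HasFDerivAt (jAct g)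
      ((betaC g.M q.1 ^ 2 • ContinuousLinearMap.fst ℂ ℂ (Fin N → ℂ)).prod
        (betaC g.M q.1 • (ContinuousLinearMap.snd ℂ ℂ (Fin N → ℂ)
            + (ContinuousLinearMap.fst ℂ ℂ (Fin N → ℂ)).smulRight (col1 g.X))
          + ((-((g.M 1 0 : ℝ) : ℂ) * betaC g.M q.1 ^ 2)
              • ContinuousLinearMap.fst ℂ ℂ (Fin N → ℂ)).smulRight
            (q.2 + q.1 • col1 g.X + col2 g.X))) q := by
  have h := denom_ne_zero_of_det_eq_one g.M hM hq
  have hw : HasFDerivAt (fun p : ℂ × (Fin N → ℂ) => p.2 + p.1 • col1 g.X + col2 g.X)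
      (ContinuousLinearMap.snd ℂ ℂ (Fin N → ℂ)
        + (ContinuousLinearMap.fst ℂ ℂ (Fin N → ℂ)).smulRight (col1 g.X)) q :=
    (hasFDerivAt_snd.add (hasFDerivAt_fst.smul_const (col1 g.X))).add_const _
  exact ((hasDerivAt_mAct hM h).comp_hasFDerivAt q hasFDerivAt_fst).prodMk
    (((hasDerivAt_betaC h).comp_hasFDerivAt q hasFDerivAt_fst).smul hw)

theorem fderiv_jAct_apply_z (hM : g.M.det = 1) (hq : 0 < q.1.im) (j : Fin N) :
    fderiv ℂ (jAct g) q (0, Pi.single j 1) = (0, Pi.single j (betaC g.M q.1)) := by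
  rw [(hasFDerivAt_jAct hM hq).fderiv]
  ext i <;> simp [Pi.single_apply]

theorem yC_jAct (hM : g.M.det = 1) (hq : 0 < q.1.im) :
    yC (jAct g q) = yC q * betaC g.M q.1 * conj (betaC g.M q.1) :=
  im_mAct hM (denom_ne_zero_of_det_eq_one g.M hM hq)

theorem conj_betaC_smul_fderiv_jAct_imVec (hM : g.M.det = 1) (hq : 0 < q.1.im) :
    conj (betaC g.M q.1) • fderiv ℂ (jAct g) q (imVec q)
      = betaC g.M q.1 • imVec (jAct g q) := by
  have h := denom_ne_zero_of_det_eq_one g.M hM hq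
  have hβ := im_betaC h
  rw [(hasFDerivAt_jAct hM hq).fderiv]
  ext j
  · show conj (betaC g.M q.1) * (betaC g.M q.1 ^ 2 * yC q) = betaC g.M q.1 * yC (jAct g q)
    rw [yC_jAct hM hq]
    ring
  · have hw : conj (q.2 j + q.1 * col1 g.X j + col2 g.X j)
        = conj (q.2 j) + conj q.1 * col1 g.X j + col2 g.X j := by
      simp [col1, col2]
    show conj (betaC g.M q.1) * (betaC g.M q.1 * (vC q j + yC q * col1 g.X j)
        + -((g.M 1 0 : ℝ) : ℂ) * betaC g.M q.1 ^ 2 * yC q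
          * (q.2 j + q.1 * col1 g.X j + col2 g.X j))
      = betaC g.M q.1 * ((betaC g.M q.1 * (q.2 j + q.1 * col1 g.X j + col2 g.X j)).im : ℂ)
    simp only [vC, yC, Complex.im_eq_sub_conj, map_mul, hw] at hβ ⊢
    linear_combination (-(betaC g.M q.1 * (q.2 j + q.1 * col1 g.X j + col2 g.X j))) * hβ

end JacobiAction

section Slash

variable {N : ℕ} (k : ℤ) (L : Matrix (Fin N) (Fin N) ℂ) (g : JTriple N)

def jFactor (p : ℂ × (Fin N → ℂ)) : ℂ := betaC g.M p.1 ^ k * alphaL L g p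

variable {k L g} {f : ℂ × (Fin N → ℂ) → ℂ} {q : ℂ × (Fin N → ℂ)}

theorem jFactor_eq_jFactor_sub_two_mul (hβ : betaC g.M q.1 ≠ 0) :
    jFactor k L g q = jFactor (k - 2) L g q * betaC g.M q.1 ^ 2 := by
  rw [jFactor, jFactor, zpow_sub₀ hβ]
  field_simp

theorem differentiableAt_jFactor (hM : g.M.det = 1) (hq : 0 < q.1.im) :
    DifferentiableAt ℂ (jFactor k L g) q := by
  have h := denom_ne_zero_of_det_eq_one g.M hM hq
  have hβ : DifferentiableAt ℂ (fun p : ℂ × (Fin N → ℂ) => betaC g.M p.1) q :=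
    ((hasDerivAt_betaC h).comp_hasFDerivAt q hasFDerivAt_fst).differentiableAt
  have hβk := hβ.zpow (m := k) (Or.inl (inv_ne_zero h))
  unfold jFactor alphaL
  simp only [Matrix.trace, Matrix.diag, Matrix.mul_apply, aFun, Matrix.sub_apply,
    Matrix.add_apply, Matrix.smul_apply, Matrix.map_apply, vecMulVec_apply, Pi.add_apply,
    Pi.smul_apply, smul_eq_mul]
  fun_prop

theorem wirtingerBar_jSlash (hM : g.M.det = 1) (hq : 0 < q.1.im)
    (hf : DifferentiableAt ℝ f (jAct g q)) (w : ℂ × (Fin N → ℂ)) :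
    wirtingerBar (jSlash k L f g) q w
      = jFactor k L g q * wirtingerBar f (jAct g q) (fderiv ℂ (jAct g) q w) := by
  have hF := differentiableAt_jFactor (k := k) (L := L) hM hq
  have hφ := (hasFDerivAt_jAct hM hq).differentiableAt
  rw [show jSlash k L f g = fun p => jFactor k L g p * f (jAct g p) from rfl,
    wirtingerBar_mul (g := fun p => f (jAct g p)) (hF.restrictScalars ℝ)
      (hf.comp q (hφ.restrictScalars ℝ)),
    wirtingerBar_eq_zero hF, wirtingerBar_comp hf hφ, LinearMap.zero_apply, zero_mul, zero_add]

theorem dZBar_jSlash (hM : g.M.det = 1) (hq : 0 < q.1.im)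
    (hf : DifferentiableAt ℝ f (jAct g q)) (j : Fin N) :
    dZBar j (jSlash k L f g) q
      = jFactor k L g q * conj (betaC g.M q.1) * dZBar j f (jAct g q) := by
  rw [dZBar_eq_wirtingerBar, wirtingerBar_jSlash hM hq hf, fderiv_jAct_apply_z hM hq,
    wirtingerBar_zero_single, mul_assoc]

theorem opXm_jSlash (hM : g.M.det = 1) (hq : 0 < q.1.im)
    (hf : DifferentiableAt ℝ f (jAct g q)) :
    opXm (jSlash k L f g) q = jFactor (k - 2) L g q * opXm f (jAct g q) := by
  have hW : betaC g.M q.1 * wirtingerBar f (jAct g q) (fderiv ℂ (jAct g) q (imVec q))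
      = conj (betaC g.M q.1) * wirtingerBar f (jAct g q) (imVec (jAct g q)) := by
    simpa using congrArg (wirtingerBar f (jAct g q)) (conj_betaC_smul_fderiv_jAct_imVec hM hq)
  rw [opXm_eq_wirtingerBar, opXm_eq_wirtingerBar, wirtingerBar_jSlash hM hq hf, yC_jAct hM hq,
    jFactor_eq_jFactor_sub_two_mul (betaC_ne_zero g.M hM hq)]
  linear_combination (-2 * I * yC q * jFactor (k - 2) L g q * betaC g.M q.1) * hW

theorem dZBar_dZBar_jSlash (hM : g.M.det = 1) (hq : 0 < q.1.im) (hf : ContDiff ℝ 2 f)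
    (i j : Fin N) :
    dZBar i (fun p => dZBar j (jSlash k L f g) p) q
      = jFactor k L g q * conj (betaC g.M q.1) ^ 2
        * dZBar i (fun p => dZBar j f p) (jAct g q) := by
  have hφ := (hasFDerivAt_jAct hM hq).differentiableAt
  have hF := differentiableAt_jFactor (k := k) (L := L) hM hq
  have hconjβ : DifferentiableAt ℝ (fun τ => conj (betaC g.M τ)) q.1 :=
    Complex.conjCLE.differentiableAt.comp q.1
      ((hasDerivAt_betaC (denom_ne_zero_of_det_eq_one g.M hM hq)).differentiableAt
        |>.restrictScalars ℝ)
  have hconjβ' : DifferentiableAt ℝ (fun p : ℂ × (Fin N → ℂ) => conj (betaC g.M p.1)) q :=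
    hconjβ.comp q differentiableAt_fst
  have hG : DifferentiableAt ℝ (fun p => jFactor k L g p * conj (betaC g.M p.1)) q :=
    (hF.restrictScalars ℝ).mul hconjβ'
  have hK : DifferentiableAt ℝ (fun p => dZBar j f (jAct g p)) q :=
    (differentiable_dZBar hf j _).comp q (hφ.restrictScalars ℝ)
  have hG0 : wirtingerBar (fun p => jFactor k L g p * conj (betaC g.M p.1)) q (0, Pi.single i 1)
      = 0 := by
    rw [wirtingerBar_mul (hF.restrictScalars ℝ) hconjβ', wirtingerBar_eq_zero hF,
      wirtingerBar_comp_fst_apply_zero_prodMk hconjβ]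
    simp
  have hev : (fun p => dZBar j (jSlash k L f g) p)
      =ᶠ[𝓝 q] fun p => jFactor k L g p * conj (betaC g.M p.1) * dZBar j f (jAct g p) := by
    filter_upwards
      [(isOpen_lt continuous_const (Complex.continuous_im.comp continuous_fst)).mem_nhds hq]
      with p hp
    exact dZBar_jSlash hM hp ((hf.differentiable (by norm_num)).differentiableAt) j
  rw [dZBar_eq_wirtingerBar, hev.wirtingerBar_eq, wirtingerBar_mul hG hK, hG0,
    wirtingerBar_comp (differentiable_dZBar hf j _) hφ, fderiv_jAct_apply_z hM hq,
    wirtingerBar_zero_single]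
  ring

end Slash

theorem opDm_covariant_general (N : ℕ) (k : ℤ) (L : Matrix (Fin N) (Fin N) ℂ)
    (g : JTriple N) (hg : g.IsMem)
    (f : ℂ × (Fin N → ℂ) → ℂ) (hf : ContDiff ℝ (⊤ : ℕ∞) f)
    (p : ℂ × (Fin N → ℂ)) (hp : 0 < p.1.im) :
    opDm L (jSlash k L f g) p = jSlash (k - 2) L (opDm L f) g p := by
  obtain ⟨hM, -⟩ := hg
  have hf2 : ContDiff ℝ 2 f := hf.of_le (WithTop.coe_le_coe.mpr le_top)
  have hΔ : ∑ i, ∑ j, (Lfrak L)⁻¹ i j * dZBar i (fun q => dZBar j (jSlash k L f g) q) p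
      = jFactor k L g p * conj (betaC g.M p.1) ^ 2
        * ∑ i, ∑ j, (Lfrak L)⁻¹ i j * dZBar i (fun q => dZBar j f q) (jAct g p) := by
    simp only [dZBar_dZBar_jSlash hM hp hf2, Finset.mul_sum]
    exact Finset.sum_congr rfl fun i _ => Finset.sum_congr rfl fun j _ => by ring
  change _ = jFactor (k - 2) L g p * opDm L f (jAct g p)
  rw [opDm, opDm, opXm_jSlash hM hp (hf2.differentiable (by norm_num) _), hΔ, yC_jAct hM hp,
    jFactor_eq_jFactor_sub_two_mul (k := k) (betaC_ne_zero g.M hM hp)]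
  ring

/-- `D₋^{(L)}` is covariant from the weight-`k` to the weight-`(k−2)` slash action:
`D₋^{(L)}(f|_{k,L}[g]) = (D₋^{(L)}f)|_{k-2,L}[g]`. -/
theorem opDm_covariant (N : ℕ) (hN : 1 ≤ N) (k : ℤ) (L : Matrix (Fin N) (Fin N) ℂ)
    (hL : L.IsSymm) (hdet : IsUnit L.det) (g : JTriple N) (hg : g.IsMem)
    (f : ℂ × (Fin N → ℂ) → ℂ) (hf : ContDiff ℝ (⊤ : ℕ∞) f)
    (p : ℂ × (Fin N → ℂ)) (hp : 0 < p.1.im) :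
    opDm L (jSlash k L f g) p = jSlash (k - 2) L (opDm L f) g p :=
  opDm_covariant_general N k L g hg f hf p hp
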